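/- Product update with the action model E2 computes the non-inflating update rule with conservative tie-breaking: for any threshold model M = (A, N, B, θ), M ⊗ E2 is isomorphic to (A, N, B⁺, θ) where B⁺ = {a : |N(a)∩B|/|N(a)| > θ} ∪ {a : |N(a)∩B|/|N(a)| = θ and a ∈ B}. -/

import Mathlib

open Finset
open scoped Classical

variable {α : Type*}

noncomputable def nbhd [Fintype α] (N : α → α → Prop) (a : α) : Finset α :=
  Finset.univ.filter (fun b => N a b)

noncomputable def frac [Fintype α] (N : α → α → Prop) (B : Finset α) (a : α) : ℝ :=
  ((nbhd N a ∩ B).card : ℝ) / ((nbhd N a).card : ℝ)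

/-- Postconditions of action-model states: `B`, `¬B`, or `⊤` (no change). -/
inductive Post where
  | B : Post
  | notB : Post
  | top : Post
deriving DecidableEq

/-- An action model over agents `α` with states `S`: a relation, and for each
state a precondition (given by its extension, a set of agents) and a
postcondition. -/
structure ActionModel (α : Type*) (S : Type*) where
  R : S → S → Prop
  pre : S → Finset α
  post : S → Post

/-- Membership of a product-update pair `(a,σ)` in the updated behavior set
`B↑`. -/
def BUp (E : ActionModel α S) (B : Finset α) (a : α) (σ : S) : Prop :=
  (a ∈ B ∧ E.post σ ≠ Post.notB) ∨ E.post σ = Post.B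

noncomputable def noninfl [Fintype α] (N : α → α → Prop) (θ : ℝ) (B : Finset α) : Finset α :=
  Finset.univ.filter (fun a => θ < frac N B a) ∪
    Finset.univ.filter (fun a => frac N B a = θ ∧ a ∈ B)

/-- The action model `E2`: state `0` = (`⟨<⟩B`, post `B`), state `1` =
(`(=)B`, post `⊤`), state `2` = (`[>]¬B`, post `¬B`); full relation. -/
noncomputable def E2 [Fintype α] (N : α → α → Prop) (θ : ℝ) (B : Finset α) :
    ActionModel α (Fin 3) where
  R := fun _ _ => True
  pre := fun σ =>
    if σ = 0 then Finset.univ.filter (fun a => θ < frac N B a)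
    else if σ = 1 then Finset.univ.filter (fun a => frac N B a = θ)
    else Finset.univ.filter (fun a => frac N B a < θ)
  post := fun σ => if σ = 0 then Post.B else if σ = 1 then Post.top else Post.notB

/-!
The preconditions of `E2` split the agents by the trichotomy of `frac N B a` against `θ`, so every
agent survives the update in exactly one copy `(a, σ)`, and the full relation of `E2` leaves the
network unchanged. The postcondition of that copy makes `a` adopt `B` when the fraction exceeds
`θ`, keep its current behaviour on a tie, and drop `B` otherwise, which is the non-inflating rule.
-/

namespace ActionModel

variable {S : Type*} (E : ActionModel α S) (s : α → S) (hs : ∀ a σ, a ∈ E.pre σ ↔ σ = s a)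

def copy (a : α) : {p : α × S // p.1 ∈ E.pre p.2} :=
  ⟨(a, s a), (hs a (s a)).2 rfl⟩

theorem copy_bijective : Function.Bijective (copy E s hs) := by
  refine ⟨fun a b hab => congrArg (fun p => p.1.1) hab, ?_⟩
  rintro ⟨⟨a, σ⟩, ha⟩
  obtain rfl : σ = s a := (hs a σ).1 ha
  exact ⟨a, rfl⟩

end ActionModel

noncomputable def e2State (θ x : ℝ) : Fin 3 :=
  if θ < x then 0 else if x = θ then 1 else 2

section E2

variable [Fintype α] (N : α → α → Prop) (θ : ℝ) (B : Finset α)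

theorem mem_pre_E2_iff (a : α) (σ : Fin 3) :
    a ∈ (E2 N θ B).pre σ ↔ σ = e2State θ (frac N B a) := by
  rcases lt_trichotomy θ (frac N B a) with h | h | h
  · fin_cases σ <;> simp [E2, e2State, h, h.ne', h.not_gt]
  · fin_cases σ <;> simp [E2, e2State, h]
  · fin_cases σ <;> simp [E2, e2State, h, h.ne, h.not_gt]

theorem bUp_E2_e2State_iff (a : α) :
    BUp (E2 N θ B) B a (e2State θ (frac N B a)) ↔ a ∈ noninfl N θ B := by
  rcases lt_trichotomy θ (frac N B a) with h | h | h
  · simp [BUp, E2, e2State, noninfl, h]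
  · simp [BUp, E2, e2State, noninfl, h]
  · simp [BUp, E2, e2State, noninfl, h.ne, h.not_gt]

end E2

theorem E2_computes_noninflating_general [Fintype α] (N : α → α → Prop)
    (θ : ℝ) (B : Finset α) :
    ∃ f : α → {p : α × Fin 3 // p.1 ∈ (E2 N θ B).pre p.2},
      Function.Bijective f ∧ (∀ a, (f a).1.1 = a) ∧
      (∀ a b, N a b ↔
        (N (f a).1.1 (f b).1.1 ∧ (E2 N θ B).R (f a).1.2 (f b).1.2)) ∧
      (∀ a, a ∈ noninfl N θ B ↔ BUp (E2 N θ B) B (f a).1.1 (f a).1.2) := by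
  let s a := e2State θ (frac N B a)
  have hs : ∀ a σ, a ∈ (E2 N θ B).pre σ ↔ σ = s a := mem_pre_E2_iff N θ B
  refine ⟨ActionModel.copy _ s hs, ActionModel.copy_bijective _ s hs, fun _ => rfl,
    fun _ _ => (and_iff_left trivial).symm, fun a => (bUp_E2_e2State_iff N θ B a).symm⟩

/-- product update with `E2` computes the non-inflating update
rule with conservative tie-breaking: `M ⊗ E2` is isomorphic to
`(A, N, B⁺, θ)` with `B⁺ = noninfl N θ B`. -/
theorem E2_computes_noninflating [Fintype α] (N : α → α → Prop)
    (hirr : ∀ a, ¬ N a a) (hsym : ∀ a b, N a b → N b a)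
    (θ : ℝ) (hθ0 : 0 ≤ θ) (hθ1 : θ ≤ 1) (B : Finset α)
    (hnb : ∀ a, (nbhd N a).Nonempty) :
    ∃ f : α → {p : α × Fin 3 // p.1 ∈ (E2 N θ B).pre p.2},
      Function.Bijective f ∧ (∀ a, (f a).1.1 = a) ∧
      (∀ a b, N a b ↔
        (N (f a).1.1 (f b).1.1 ∧ (E2 N θ B).R (f a).1.2 (f b).1.2)) ∧
      (∀ a, a ∈ noninfl N θ B ↔ BUp (E2 N θ B) B (f a).1.1 (f a).1.2) :=
  E2_computes_noninflating_general N θ B
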